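/- arXiv:2307.13966 — 2 statements merged into one kernel-verified Lean document; each statement's English description precedes it below -/
import Mathlib

section
/- (Gale–Nikaido, 2×2 P-matrix case.) Let f : K → ℝ² be continuously differentiable on a closed rectangle K ⊆ ℝ², and suppose that at every point of K the Jacobian matrix of f is a P-matrix (all principal minors strictly positive). Then f is injective on K. -/
open Set

namespace GN

variable {f : (Fin 2 → ℝ) → (Fin 2 → ℝ)} {a b : Fin 2 → ℝ}
  {J : (Fin 2 → ℝ) → ((Fin 2 → ℝ) →L[ℝ] (Fin 2 → ℝ))}

lemma eta2 (p : Fin 2 → ℝ) : ![p 0, p 1] = p := by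
  funext i; fin_cases i <;> simp

lemma decomp (v : Fin 2 → ℝ) :
    v = v 0 • (Pi.single (0 : Fin 2) (1:ℝ) : Fin 2 → ℝ)
      + v 1 • (Pi.single (1 : Fin 2) (1:ℝ) : Fin 2 → ℝ) := by
  funext i; fin_cases i <;> simp

lemma seg_mem {p q : Fin 2 → ℝ} (hp : p ∈ Icc a b) (hq : q ∈ Icc a b) {c : ℝ}
    (hc : c ∈ Icc (0:ℝ) 1) : p + c • (q - p) ∈ Icc a b := by
  obtain ⟨hp1, hp2⟩ := hp; obtain ⟨hq1, hq2⟩ := hq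
  constructor <;> intro i <;>
    · have h1 := hp1 i; have h2 := hp2 i; have h3 := hq1 i; have h4 := hq2 i
      have hc0 := hc.1; have hc1 := hc.2
      simp only [Pi.add_apply, Pi.smul_apply, Pi.sub_apply, smul_eq_mul]
      nlinarith

lemma mk_mem {s t : ℝ} (h1 : a 0 ≤ s) (h2 : s ≤ b 0) (h3 : a 1 ≤ t) (h4 : t ≤ b 1) :
    ![s, t] ∈ Icc a b := by
  constructor <;> intro i <;> fin_cases i <;> simpa

lemma mem_coords {s t : ℝ} (h : ![s, t] ∈ Icc a b) :
    a 0 ≤ s ∧ s ≤ b 0 ∧ a 1 ≤ t ∧ t ≤ b 1 := by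
  obtain ⟨h1, h2⟩ := h
  exact ⟨by simpa using h1 0, by simpa using h2 0, by simpa using h1 1, by simpa using h2 1⟩

lemma contA (hJcont : ContinuousOn J (Icc a b)) (v : Fin 2 → ℝ) (i : Fin 2) :
    ContinuousOn (fun ξ => J ξ v i) (Icc a b) :=
  ((continuous_apply i).comp
    (ContinuousLinearMap.apply ℝ (Fin 2 → ℝ) v).continuous).comp_continuousOn hJcont

lemma mvt (hderiv : ∀ x ∈ Icc a b, HasFDerivWithinAt f (J x) (Icc a b) x)
    {p q : Fin 2 → ℝ} (hp : p ∈ Icc a b) (hq : q ∈ Icc a b) (i : Fin 2) :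
    ∃ c ∈ Icc (0:ℝ) 1, p + c • (q - p) ∈ Icc a b ∧
      f q i - f p i =
        (q 0 - p 0) * J (p + c • (q - p)) (Pi.single 0 1) i
      + (q 1 - p 1) * J (p + c • (q - p)) (Pi.single 1 1) i := by
  set γ : ℝ → (Fin 2 → ℝ) := fun τ => p + τ • (q - p) with hγ
  have hγmem : ∀ τ ∈ Icc (0:ℝ) 1, γ τ ∈ Icc a b := fun τ hτ => seg_mem hp hq hτ
  have hγderiv : ∀ τ : ℝ, HasDerivAt γ (q - p) τ := by
    intro τ
    simpa [hγ] using ((hasDerivAt_id τ).smul_const (q - p)).const_add p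
  have hγcont : Continuous γ := by
    exact continuous_const.add (continuous_id.smul continuous_const)
  have hfc : ContinuousOn f (Icc a b) := fun x hx => (hderiv x hx).continuousWithinAt
  set g : ℝ → ℝ := fun τ => f (γ τ) i with hgdef
  have hg' : ∀ τ ∈ Ioo (0:ℝ) 1, HasDerivAt g (J (γ τ) (q - p) i) τ := by
    intro τ hτ
    have h1 : HasDerivWithinAt (f ∘ γ) (J (γ τ) (q - p)) (Icc 0 1) τ :=
      (hderiv _ (hγmem τ (Ioo_subset_Icc_self hτ))).comp_hasDerivWithinAt τ
        (hγderiv τ).hasDerivWithinAt (fun x hx => hγmem x hx)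
    have h2 : HasDerivAt (f ∘ γ) (J (γ τ) (q - p)) τ :=
      h1.hasDerivAt (Icc_mem_nhds hτ.1 hτ.2)
    exact hasDerivAt_pi.1 h2 i
  have hgc : ContinuousOn g (Icc 0 1) :=
    (continuous_apply i).comp_continuousOn (hfc.comp hγcont.continuousOn hγmem)
  obtain ⟨c, hc, hceq⟩ :=
    exists_hasDerivAt_eq_slope g (fun τ => J (γ τ) (q - p) i) one_pos hgc hg'
  refine ⟨c, Ioo_subset_Icc_self hc, hγmem c (Ioo_subset_Icc_self hc), ?_⟩
  have hγ1 : γ 1 = q := by funext j; simp [hγ]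
  have hγ0 : γ 0 = p := by funext j; simp [hγ]
  have hslope : J (γ c) (q - p) i = f q i - f p i := by
    rw [hceq]; simp [hgdef, hγ1, hγ0]
  have hexp : J (γ c) (q - p) i =
      (q 0 - p 0) * J (γ c) (Pi.single 0 1) i + (q 1 - p 1) * J (γ c) (Pi.single 1 1) i := by
    conv_lhs => rw [decomp (q - p)]
    rw [map_add, map_smul, map_smul]
    simp [Pi.sub_apply]
  rw [← hslope, hexp]

lemma consts (hab : a ≤ b)
    (hJcont : ContinuousOn J (Icc a b))
    (hP : ∀ x ∈ Icc a b,
      0 < (J x) (Pi.single 0 1) 0 ∧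
      0 < (J x) (Pi.single 1 1) 1 ∧
      0 < (J x) (Pi.single 0 1) 0 * (J x) (Pi.single 1 1) 1
          - (J x) (Pi.single 1 1) 0 * (J x) (Pi.single 0 1) 1) :
    ∃ m ρ M : ℝ, 0 < m ∧ 0 < ρ ∧ 0 ≤ M ∧
      (∀ ξ ∈ Icc a b, m ≤ J ξ (Pi.single 0 1) 0) ∧
      (∀ ξ ∈ Icc a b, |J ξ (Pi.single 1 1) 0| ≤ M) ∧
      (∀ ξ ∈ Icc a b, ∀ η ∈ Icc a b, ‖ξ - η‖ ≤ ρ →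
        0 < J ξ (Pi.single 0 1) 0 * J η (Pi.single 1 1) 1
            - J ξ (Pi.single 1 1) 0 * J η (Pi.single 0 1) 1) := by
  have hane : (Icc a b).Nonempty := ⟨a, le_refl a, hab⟩
  have hK : IsCompact (Icc a b) := isCompact_Icc
  obtain ⟨ξm, hξm, hm⟩ := hK.exists_isMinOn hane (contA hJcont (Pi.single 0 1) 0)
  obtain ⟨ξM, hξM, hM⟩ := hK.exists_isMaxOn hane
    ((contA hJcont (Pi.single 1 1) 0).abs)
  set G : (Fin 2 → ℝ) × (Fin 2 → ℝ) → ℝ := fun p =>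
    J p.1 (Pi.single 0 1) 0 * J p.2 (Pi.single 1 1) 1
      - J p.1 (Pi.single 1 1) 0 * J p.2 (Pi.single 0 1) 1 with hG
  have hGcont : ContinuousOn G (Icc a b ×ˢ Icc a b) := by
    apply ContinuousOn.sub
    · exact ((contA hJcont (Pi.single 0 1) 0).comp continuousOn_fst (fun p hp => hp.1)).mul
        ((contA hJcont (Pi.single 1 1) 1).comp continuousOn_snd (fun p hp => hp.2))
    · exact ((contA hJcont (Pi.single 1 1) 0).comp continuousOn_fst (fun p hp => hp.1)).mul
        ((contA hJcont (Pi.single 0 1) 1).comp continuousOn_snd (fun p hp => hp.2))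
  set S : Set ((Fin 2 → ℝ) × (Fin 2 → ℝ)) := (Icc a b ×ˢ Icc a b) ∩ G ⁻¹' (Iic 0) with hS
  have hSclosed : IsClosed S :=
    hGcont.preimage_isClosed_of_isClosed (isClosed_Icc.prod isClosed_Icc) isClosed_Iic
  have hScomp : IsCompact S :=
    (hK.prod hK).of_isClosed_subset hSclosed inter_subset_left
  have key : ∃ ρ > 0, ∀ ξ ∈ Icc a b, ∀ η ∈ Icc a b, ‖ξ - η‖ ≤ ρ → 0 < G (ξ, η) := by
    rcases S.eq_empty_or_nonempty with hemp | hne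
    · refine ⟨1, one_pos, fun ξ hξ η hη _ => ?_⟩
      by_contra hle
      have : (ξ, η) ∈ S := ⟨⟨hξ, hη⟩, by simpa using le_of_not_gt hle⟩
      simp [hemp] at this
    · obtain ⟨p, hpS, hpmin⟩ := hScomp.exists_isMinOn hne
        (continuous_fst.sub continuous_snd).norm.continuousOn
      have hρ0 : 0 < ‖p.1 - p.2‖ := by
        rcases eq_or_lt_of_le (norm_nonneg (p.1 - p.2)) with h | h
        · exfalso
          have hp12 : p.1 = p.2 := by
            have := (norm_eq_zero.mp h.symm); exact sub_eq_zero.mp this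
          have hdet := (hP p.1 hpS.1.1).2.2
          have : G p ≤ 0 := hpS.2
          rw [hG] at this
          simp only at this
          rw [← hp12] at this
          linarith
        · exact h
      refine ⟨‖p.1 - p.2‖ / 2, by linarith, fun ξ hξ η hη hdist => ?_⟩
      by_contra hle
      have hmem : (ξ, η) ∈ S := ⟨⟨hξ, hη⟩, by simpa using le_of_not_gt hle⟩
      have h2 : ‖p.1 - p.2‖ ≤ ‖ξ - η‖ := hpmin hmem
      linarith
  obtain ⟨ρ, hρpos, hρ⟩ := key
  refine ⟨J ξm (Pi.single 0 1) 0, ρ, |J ξM (Pi.single 1 1) 0|,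
    (hP ξm hξm).1, hρpos, abs_nonneg _, fun ξ hξ => hm hξ, fun ξ hξ => hM hξ,
    fun ξ hξ η hη h => hρ ξ hξ η hη h⟩

section
variable (hderiv : ∀ x ∈ Icc a b, HasFDerivWithinAt f (J x) (Icc a b) x)
    (hP : ∀ x ∈ Icc a b,
      0 < (J x) (Pi.single 0 1) 0 ∧
      0 < (J x) (Pi.single 1 1) 1 ∧
      0 < (J x) (Pi.single 0 1) 0 * (J x) (Pi.single 1 1) 1
          - (J x) (Pi.single 1 1) 0 * (J x) (Pi.single 0 1) 1)

include hderiv hP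

lemma mono0 {s s' t : ℝ} (h : ![s, t] ∈ Icc a b) (h' : ![s', t] ∈ Icc a b)
    (hss : s < s') : f ![s, t] 0 < f ![s', t] 0 := by
  obtain ⟨c, hc, hξ, heq⟩ := mvt hderiv h h' 0
  simp only [Matrix.cons_val_zero, Matrix.cons_val_one, Matrix.head_cons] at heq
  nlinarith [(hP _ hξ).1, mul_pos (sub_pos.2 hss) (hP _ hξ).1]

lemma mono0' {s s' t : ℝ} (h : ![s, t] ∈ Icc a b) (h' : ![s', t] ∈ Icc a b)
    (hss : s ≤ s') : f ![s, t] 0 ≤ f ![s', t] 0 := by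
  rcases eq_or_lt_of_le hss with rfl | hlt
  · exact le_refl _
  · exact (mono0 hderiv hP h h' hlt).le

lemma mono1 {s t t' : ℝ} (h : ![s, t] ∈ Icc a b) (h' : ![s, t'] ∈ Icc a b)
    (htt : t < t') : f ![s, t] 1 < f ![s, t'] 1 := by
  obtain ⟨c, hc, hξ, heq⟩ := mvt hderiv h h' 1
  simp only [Matrix.cons_val_zero, Matrix.cons_val_one, Matrix.head_cons] at heq
  nlinarith [(hP _ hξ).2.1, mul_pos (sub_pos.2 htt) (hP _ hξ).2.1]

lemma uniq0 {s s' t : ℝ} (h : ![s, t] ∈ Icc a b) (h' : ![s', t] ∈ Icc a b)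
    (he : f ![s, t] 0 = f ![s', t] 0) : s = s' := by
  rcases lt_trichotomy s s' with hlt | he' | hlt
  · exact absurd he (ne_of_lt (mono0 hderiv hP h h' hlt))
  · exact he'
  · exact absurd he.symm (ne_of_lt (mono0 hderiv hP h' h hlt))

end


set_option maxHeartbeats 2000000 in
lemma key (hab : a ≤ b)
    (hJcont : ContinuousOn J (Icc a b))
    (hderiv : ∀ x ∈ Icc a b, HasFDerivWithinAt f (J x) (Icc a b) x)
    (hP : ∀ x ∈ Icc a b,
      0 < (J x) (Pi.single 0 1) 0 ∧
      0 < (J x) (Pi.single 1 1) 1 ∧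
      0 < (J x) (Pi.single 0 1) 0 * (J x) (Pi.single 1 1) 1
          - (J x) (Pi.single 1 1) 0 * (J x) (Pi.single 0 1) 1)
    {x y : Fin 2 → ℝ} (hx : x ∈ Icc a b) (hy : y ∈ Icc a b)
    (hfxy : f x = f y) (hlt : x 1 < y 1) : False := by
  classical
  have hfc : ContinuousOn f (Icc a b) := fun z hz => (hderiv z hz).continuousWithinAt
  have hab0 : a 0 ≤ b 0 := hab 0
  have hx1a : a 1 ≤ x 1 := hx.1 1
  have hy1b : y 1 ≤ b 1 := hy.2 1
  set c₀ : ℝ := f x 0 with hc₀def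
  -- the level set T of second coordinates
  set T : Set ℝ := {t | t ∈ Icc (x 1) (y 1) ∧ ∃ s, ![s, t] ∈ Icc a b ∧ f ![s, t] 0 = c₀}
    with hTdef
  -- compactness of T
  have hTcomp : IsCompact T := by
    set C : Set (Fin 2 → ℝ) :=
      (Icc a b ∩ (fun p => f p 0) ⁻¹' {c₀}) ∩ (fun p : Fin 2 → ℝ => p 1) ⁻¹' Icc (x 1) (y 1)
      with hCdef
    have hCclosed : IsClosed C := by
      apply IsClosed.inter
      · exact (((continuous_apply 0).comp_continuousOn
          hfc).preimage_isClosed_of_isClosed isClosed_Icc isClosed_singleton)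
      · exact isClosed_Icc.preimage (continuous_apply 1)
    have hCcomp : IsCompact C :=
      isCompact_Icc.of_isClosed_subset hCclosed (fun p hp => hp.1.1)
    have hTC : T = (fun p : Fin 2 → ℝ => p 1) '' C := by
      ext t
      constructor
      · rintro ⟨ht, s, hmem, heq⟩
        exact ⟨![s, t], ⟨⟨hmem, by simpa using heq⟩, by simpa using ht⟩, by simp⟩
      · rintro ⟨p, ⟨⟨hpK, hpf⟩, hp1⟩, rfl⟩
        refine ⟨hp1, p 0, ?_, ?_⟩
        · rw [eta2]; exact hpK
        · rw [eta2]; simpa using hpf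
    rw [hTC]
    exact hCcomp.image (continuous_apply 1)
  have hTclosed : IsClosed T := hTcomp.isClosed
  have hTsub : ∀ t ∈ T, x 1 ≤ t ∧ t ≤ y 1 := fun t ht => ⟨ht.1.1, ht.1.2⟩
  -- the root function
  set φ : ℝ → ℝ :=
    fun t => if h : ∃ s, ![s, t] ∈ Icc a b ∧ f ![s, t] 0 = c₀ then h.choose else 0 with hφdef
  have hφ : ∀ t ∈ T, ![φ t, t] ∈ Icc a b ∧ f ![φ t, t] 0 = c₀ := by
    intro t ht
    have h := ht.2
    simp only [hφdef, dif_pos h]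
    exact h.choose_spec
  have hφu : ∀ t ∈ T, ∀ s, ![s, t] ∈ Icc a b → f ![s, t] 0 = c₀ → φ t = s := by
    intro t ht s hs hfs
    exact uniq0 hderiv hP (hφ t ht).1 hs (by rw [(hφ t ht).2, hfs])
  set g : ℝ → ℝ := fun t => f ![φ t, t] 1 with hgdef
  -- constants
  obtain ⟨m, ρ, M, hm0, hρ0, hM0, hm, hM, hρ⟩ := consts hab hJcont hP
  set δ : ℝ := m * ρ / (M + m) with hδdef
  have hδ0 : 0 < δ := div_pos (mul_pos hm0 hρ0) (by linarith)
  have hδeq : δ * (M + m) = m * ρ := by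
    rw [hδdef]; field_simp
  -- continuity helpers
  have hedge : ∀ s₀ : ℝ, a 0 ≤ s₀ → s₀ ≤ b 0 → ∀ u v : ℝ, a 1 ≤ u → v ≤ b 1 →
      ∀ i : Fin 2, ContinuousOn (fun t => f ![s₀, t] i) (Icc u v) := by
    intro s₀ hs1 hs2 u v hu hv i
    have hcm : Continuous (fun t : ℝ => ![s₀, t]) := by
      refine continuous_pi fun j => ?_
      fin_cases j
      · simpa using continuous_const
      · simpa using continuous_id'
    exact (continuous_apply i).comp_continuousOn
      (hfc.comp hcm.continuousOn (fun t ht => mk_mem hs1 hs2 (by linarith [ht.1]) (by linarith [ht.2])))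
  have hhorz : ∀ t : ℝ, a 1 ≤ t → t ≤ b 1 → ContinuousOn (fun s => f ![s, t] 0) (Icc (a 0) (b 0)) := by
    intro t h1 h2
    have hcm : Continuous (fun s : ℝ => ![s, t]) := by
      refine continuous_pi fun j => ?_
      fin_cases j
      · simpa using continuous_id'
      · simpa using continuous_const
    exact (continuous_apply 0).comp_continuousOn
      (hfc.comp hcm.continuousOn (fun s hs => mk_mem hs.1 hs.2 h1 h2))
  -- local increase lemma on T
  have Tlem : ∀ u ∈ T, ∀ v ∈ T, u < v → v - u ≤ δ → g u < g v := by
    intro u hu v hv huv hvu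
    obtain ⟨hPu, hfu⟩ := hφ u hu
    obtain ⟨hPv, hfv⟩ := hφ v hv
    obtain ⟨c, hc, hξ, heq0⟩ := mvt hderiv hPu hPv 0
    obtain ⟨c', hc', hη, heq1⟩ := mvt hderiv hPu hPv 1
    set ξ : Fin 2 → ℝ := ![φ u, u] + c • (![φ v, v] - ![φ u, u]) with hξdef
    set η : Fin 2 → ℝ := ![φ u, u] + c' • (![φ v, v] - ![φ u, u]) with hηdef
    simp only [Matrix.cons_val_zero, Matrix.cons_val_one, Matrix.head_cons] at heq0 heq1
    rw [hfu, hfv] at heq0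
    have heq0' : 0 = (φ v - φ u) * J ξ (Pi.single 0 1) 0 + (v - u) * J ξ (Pi.single 1 1) 0 := by
      linarith [heq0]
    have hApos : 0 < J ξ (Pi.single 0 1) 0 := (hP ξ hξ).1
    have hmA : m ≤ J ξ (Pi.single 0 1) 0 := hm ξ hξ
    have hBabs : |J ξ (Pi.single 1 1) 0| ≤ M := hM ξ hξ
    have e1 : (φ v - φ u) * J ξ (Pi.single 0 1) 0 = -((v - u) * J ξ (Pi.single 1 1) 0) := by
      linarith [heq0']
    have e2 : |φ v - φ u| * J ξ (Pi.single 0 1) 0 = (v - u) * |J ξ (Pi.single 1 1) 0| := by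
      rw [show J ξ (Pi.single 0 1) 0 = |J ξ (Pi.single 0 1) 0| from (abs_of_pos hApos).symm]
      rw [← abs_mul]
      rw [e1, abs_neg, abs_mul, abs_of_pos (show (0:ℝ) < v - u by linarith)]
    have hΔφ : m * |φ v - φ u| ≤ (v - u) * M := by
      have h3 : |φ v - φ u| * J ξ (Pi.single 0 1) 0 ≤ (v - u) * M := by
        rw [e2]; exact mul_le_mul_of_nonneg_left hBabs (by linarith)
      nlinarith [abs_nonneg (φ v - φ u)]
    have hΔφρ : |φ v - φ u| ≤ ρ := by
      nlinarith [abs_nonneg (φ v - φ u), mul_le_mul_of_nonneg_right hvu hM0, hδeq, hδ0.le]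
    have hvuρ : v - u ≤ ρ := by
      nlinarith [hδeq, hδ0.le]
    have hξη : ‖ξ - η‖ ≤ ρ := by
      rw [pi_norm_le_iff_of_nonneg hρ0.le]
      intro i
      have hcc : |c - c'| ≤ 1 := by
        rw [abs_sub_le_iff]; constructor <;> linarith [hc.1, hc.2, hc'.1, hc'.2]
      have hsub : (ξ - η) i = (c - c') * ((![φ v, v] - ![φ u, u]) i) := by
        simp only [hξdef, hηdef, Pi.sub_apply, Pi.add_apply, Pi.smul_apply, smul_eq_mul]
        ring
      rw [Real.norm_eq_abs, hsub, abs_mul]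
      fin_cases i
      · have : |(![φ v, v] - ![φ u, u]) 0| = |φ v - φ u| := by
          simp [Pi.sub_apply]
        simp only [Fin.zero_eta, Fin.isValue] at *
        rw [this]
        nlinarith [abs_nonneg (c - c'), abs_nonneg (φ v - φ u)]
      · have : |(![φ v, v] - ![φ u, u]) 1| = |v - u| := by
          simp [Pi.sub_apply]
        simp only [Fin.mk_one, Fin.isValue] at *
        rw [this, abs_of_pos (show (0:ℝ) < v - u by linarith)]
        nlinarith [abs_nonneg (c - c')]
    have hG := hρ ξ hξ η hη hξη
    have e6 : (f ![φ v, v] 1 - f ![φ u, u] 1) * J ξ (Pi.single 0 1) 0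
        = (v - u) * (J ξ (Pi.single 0 1) 0 * J η (Pi.single 1 1) 1
            - J ξ (Pi.single 1 1) 0 * J η (Pi.single 0 1) 1) := by
      linear_combination (J ξ (Pi.single 0 1) 0) * heq1 - (J η (Pi.single 0 1) 1) * heq0'
    have hfin : 0 < (f ![φ v, v] 1 - f ![φ u, u] 1) * J ξ (Pi.single 0 1) 0 := by
      rw [e6]; exact mul_pos (by linarith) hG
    have hfin2 : f ![φ u, u] 1 < f ![φ v, v] 1 := by nlinarith [hApos]
    simpa only [hgdef] using hfin2
  -- gap lemma
  have Glem : ∀ u ∈ T, ∀ v ∈ T, u < v → (∀ t, u < t → t < v → t ∉ T) → g u < g v := by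
    intro u hu v hv huv hgap
    have hu1 : x 1 ≤ u := (hTsub u hu).1
    have hv1 : v ≤ y 1 := (hTsub v hv).2
    have hau : a 1 ≤ u := by linarith
    have hvb : v ≤ b 1 := by linarith
    have hmemA : ∀ t, u ≤ t → t ≤ v → ![a 0, t] ∈ Icc a b := fun t h1 h2 =>
      mk_mem (le_refl _) hab0 (by linarith) (by linarith)
    have hmemB : ∀ t, u ≤ t → t ≤ v → ![b 0, t] ∈ Icc a b := fun t h1 h2 =>
      mk_mem hab0 (le_refl _) (by linarith) (by linarith)
    have hTm : ∀ t, u < t → t < v → ∀ s, ![s, t] ∈ Icc a b → f ![s, t] 0 = c₀ → False := by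
      intro t h1 h2 s hmem heq
      exact hgap t h1 h2 ⟨⟨by linarith, by linarith⟩, s, hmem, heq⟩
    have hclass : ∀ t, u < t → t < v → c₀ < f ![a 0, t] 0 ∨ f ![b 0, t] 0 < c₀ := by
      intro t h1 h2
      by_contra hcon
      push_neg at hcon
      obtain ⟨hA, hB⟩ := hcon
      obtain ⟨s, hs, hfs⟩ := intermediate_value_Icc hab0
        (hhorz t (by linarith) (by linarith)) ⟨hA, hB⟩
      exact hTm t h1 h2 s (mk_mem hs.1 hs.2 (by linarith) (by linarith)) hfs
    set t₀ : ℝ := (u + v) / 2 with ht₀def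
    have ht₀u : u < t₀ := by rw [ht₀def]; linarith
    have ht₀v : t₀ < v := by rw [ht₀def]; linarith
    obtain ⟨hφuK, hφuf⟩ := hφ u hu
    obtain ⟨hφvK, hφvf⟩ := hφ v hv
    obtain ⟨hcu1, hcu2, -, -⟩ := mem_coords hφuK
    obtain ⟨hcv1, hcv2, -, -⟩ := mem_coords hφvK
    rcases hclass t₀ ht₀u ht₀v with hA0 | hB0
    · -- left edge: f ![a 0, ·] 0 > c₀ at t₀
      have hfau : f ![a 0, u] 0 = c₀ := by
        have hle1 : f ![a 0, u] 0 ≤ c₀ := by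
          have := mono0' hderiv hP (hmemA u le_rfl huv.le) hφuK hcu1
          linarith [hφuf ▸ this]
        have hge1 : c₀ ≤ f ![a 0, u] 0 := by
          by_contra hlt2
          push_neg at hlt2
          have hcont' : ContinuousOn (fun t => f ![a 0, t] 0) (Icc u t₀) :=
            (hedge (a 0) le_rfl hab0 u v hau hvb 0).mono (Icc_subset_Icc le_rfl ht₀v.le)
          obtain ⟨r, hr, hqr⟩ := intermediate_value_Icc ht₀u.le hcont' ⟨hlt2.le, hA0.le⟩
          have hru : u < r := by
            rcases eq_or_lt_of_le hr.1 with heq | h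
            · exact absurd (heq ▸ hqr) (ne_of_lt hlt2)
            · exact h
          exact hTm r hru (by linarith [hr.2]) (a 0)
            (hmemA r hru.le (by linarith [hr.2])) hqr
        linarith
      have hfav : f ![a 0, v] 0 = c₀ := by
        have hle1 : f ![a 0, v] 0 ≤ c₀ := by
          have := mono0' hderiv hP (hmemA v huv.le le_rfl) hφvK hcv1
          linarith [hφvf ▸ this]
        have hge1 : c₀ ≤ f ![a 0, v] 0 := by
          by_contra hlt2
          push_neg at hlt2
          have hcont' : ContinuousOn (fun t => f ![a 0, t] 0) (Icc t₀ v) :=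
            (hedge (a 0) le_rfl hab0 u v hau hvb 0).mono (Icc_subset_Icc ht₀u.le le_rfl)
          obtain ⟨r, hr, hqr⟩ := intermediate_value_Icc' ht₀v.le hcont' ⟨hlt2.le, hA0.le⟩
          have hrv : r < v := by
            rcases eq_or_lt_of_le hr.2 with heq | h
            · exact absurd (heq ▸ hqr) (ne_of_lt hlt2)
            · exact h
          exact hTm r (by linarith [hr.1]) hrv (a 0)
            (hmemA r (by linarith [hr.1]) hrv.le) hqr
        linarith
      have hφua : φ u = a 0 :=
        uniq0 hderiv hP hφuK (hmemA u le_rfl huv.le) (by rw [hφuf, hfau])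
      have hφva : φ v = a 0 :=
        uniq0 hderiv hP hφvK (hmemA v huv.le le_rfl) (by rw [hφvf, hfav])
      have := mono1 hderiv hP (hmemA u le_rfl huv.le) (hmemA v huv.le le_rfl) huv
      simp only [hgdef]
      rw [hφua, hφva]
      exact this
    · -- right edge: f ![b 0, ·] 0 < c₀ at t₀
      have hfbu : f ![b 0, u] 0 = c₀ := by
        have hge1 : c₀ ≤ f ![b 0, u] 0 := by
          have := mono0' hderiv hP hφuK (hmemB u le_rfl huv.le) hcu2
          linarith [hφuf ▸ this]
        have hle1 : f ![b 0, u] 0 ≤ c₀ := by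
          by_contra hlt2
          push_neg at hlt2
          have hcont' : ContinuousOn (fun t => f ![b 0, t] 0) (Icc u t₀) :=
            (hedge (b 0) hab0 le_rfl u v hau hvb 0).mono (Icc_subset_Icc le_rfl ht₀v.le)
          obtain ⟨r, hr, hqr⟩ := intermediate_value_Icc' ht₀u.le hcont' ⟨hB0.le, hlt2.le⟩
          have hru : u < r := by
            rcases eq_or_lt_of_le hr.1 with heq | h
            · exact absurd (heq ▸ hqr) (ne_of_gt hlt2)
            · exact h
          exact hTm r hru (by linarith [hr.2]) (b 0)
            (hmemB r hru.le (by linarith [hr.2])) hqr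
        linarith
      have hfbv : f ![b 0, v] 0 = c₀ := by
        have hge1 : c₀ ≤ f ![b 0, v] 0 := by
          have := mono0' hderiv hP hφvK (hmemB v huv.le le_rfl) hcv2
          linarith [hφvf ▸ this]
        have hle1 : f ![b 0, v] 0 ≤ c₀ := by
          by_contra hlt2
          push_neg at hlt2
          have hcont' : ContinuousOn (fun t => f ![b 0, t] 0) (Icc t₀ v) :=
            (hedge (b 0) hab0 le_rfl u v hau hvb 0).mono (Icc_subset_Icc ht₀u.le le_rfl)
          obtain ⟨r, hr, hqr⟩ := intermediate_value_Icc ht₀v.le hcont' ⟨hB0.le, hlt2.le⟩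
          have hrv : r < v := by
            rcases eq_or_lt_of_le hr.2 with heq | h
            · exact absurd (heq ▸ hqr) (ne_of_gt hlt2)
            · exact h
          exact hTm r (by linarith [hr.1]) hrv (b 0)
            (hmemB r (by linarith [hr.1]) hrv.le) hqr
        linarith
      have hφub : φ u = b 0 :=
        uniq0 hderiv hP hφuK (hmemB u le_rfl huv.le) (by rw [hφuf, hfbu])
      have hφvb : φ v = b 0 :=
        uniq0 hderiv hP hφvK (hmemB v huv.le le_rfl) (by rw [hφvf, hfbv])
      have := mono1 hderiv hP (hmemB u le_rfl huv.le) (hmemB v huv.le le_rfl) huv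
      simp only [hgdef]
      rw [hφub, hφvb]
      exact this
  -- chaining
  have chain : ∀ n : ℕ, ∀ u ∈ T, ∀ v ∈ T, u < v → v - u ≤ n * δ → g u < g v := by
    intro n
    induction n with
    | zero => intro u hu v hv huv hle; simp at hle; linarith
    | succ n ih =>
      intro u hu v hv huv hle
      by_cases hsmall : v - u ≤ δ
      · exact Tlem u hu v hv huv hsmall
      · push_neg at hsmall
        set S₁ : Set ℝ := T ∩ Icc u (u + δ) with hS₁def
        have hS₁ne : S₁.Nonempty := ⟨u, hu, le_refl u, by linarith⟩
        have hS₁comp : IsCompact S₁ := hTcomp.inter_right isClosed_Icc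
        set w : ℝ := sSup S₁ with hwdef
        have hwS : w ∈ S₁ := hS₁comp.sSup_mem hS₁ne
        have hwT : w ∈ T := hwS.1
        have huw : u ≤ w := hwS.2.1
        have hwδ : w ≤ u + δ := hwS.2.2
        set S₂ : Set ℝ := T ∩ Icc (u + δ) v with hS₂def
        have hS₂ne : S₂.Nonempty := ⟨v, hv, by linarith, le_refl v⟩
        have hS₂comp : IsCompact S₂ := hTcomp.inter_right isClosed_Icc
        set w' : ℝ := sInf S₂ with hw'def
        have hw'S : w' ∈ S₂ := hS₂comp.sInf_mem hS₂ne
        have hw'T : w' ∈ T := hw'S.1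
        have hδw' : u + δ ≤ w' := hw'S.2.1
        have hw'v : w' ≤ v := hw'S.2.2
        have hww' : w ≤ w' := le_trans hwδ hδw'
        have hgap : ∀ t, w < t → t < w' → t ∉ T := by
          intro t h1 h2 ht
          by_cases hts : t ≤ u + δ
          · have htS : t ∈ S₁ := ⟨ht, by linarith, hts⟩
            have := le_csSup hS₁comp.bddAbove htS
            linarith
          · push_neg at hts
            have htS : t ∈ S₂ := ⟨ht, hts.le, by linarith⟩
            have := csInf_le hS₂comp.bddBelow htS
            linarith
        have h2 : g w ≤ g w' := by
          rcases eq_or_lt_of_le hww' with heq | hlt2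
          · rw [heq]
          · exact (Glem w hwT w' hw'T hlt2 hgap).le
        have hstrict : g u < g w' := by
          rcases eq_or_lt_of_le huw with heq | hlt2
          · have hlt3 : w < w' := by rw [← heq]; linarith
            calc g u = g w := by rw [heq]
            _ < g w' := Glem w hwT w' hw'T hlt3 hgap
          · exact lt_of_lt_of_le (Tlem u hu w hwT hlt2 (by linarith)) h2
        rcases eq_or_lt_of_le hw'v with heq | hlt2
        · rw [← heq]; exact hstrict
        · refine hstrict.trans (ih w' hw'T v hv hlt2 ?_)
          push_cast at hle ⊢
          linarith
  -- conclusion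
  have hx1T : x 1 ∈ T := by
    refine ⟨⟨le_refl _, hlt.le⟩, x 0, ?_, ?_⟩
    · rw [eta2]; exact hx
    · rw [eta2]
  have hy1T : y 1 ∈ T := by
    refine ⟨⟨hlt.le, le_refl _⟩, y 0, ?_, ?_⟩
    · rw [eta2]; exact hy
    · rw [eta2, ← hfxy]
  obtain ⟨n, hn⟩ := exists_nat_ge ((y 1 - x 1) / δ)
  have hchain := chain n (x 1) hx1T (y 1) hy1T hlt (by
    rw [div_le_iff₀ hδ0] at hn
    linarith)
  have hφx : φ (x 1) = x 0 := hφu (x 1) hx1T (x 0) (by rw [eta2]; exact hx) (by rw [eta2])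
  have hφy : φ (y 1) = y 0 := hφu (y 1) hy1T (y 0) (by rw [eta2]; exact hy) (by rw [eta2, ← hfxy])
  have hgx : g (x 1) = f x 1 := by
    simp only [hgdef]; rw [hφx, eta2]
  have hgy : g (y 1) = f x 1 := by
    simp only [hgdef]; rw [hφy, eta2, ← hfxy]
  rw [hgx, hgy] at hchain
  exact lt_irrefl _ hchain


end GN

/-- Gale–Nikaido (2×2 P-matrix case): if `f` is continuously differentiable on a closed rectangle
`K ⊆ ℝ²` and at every point of `K` its Jacobian matrix is a P-matrix (both diagonal entries and
the determinant strictly positive), then `f` is injective on `K`. -/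
theorem stmt_10 (f : (Fin 2 → ℝ) → (Fin 2 → ℝ)) (a b : Fin 2 → ℝ) (hab : a ≤ b)
    -- f is C¹ on the closed rectangle K = Icc a b, with Jacobian J
    (J : (Fin 2 → ℝ) → ((Fin 2 → ℝ) →L[ℝ] (Fin 2 → ℝ)))
    (hJcont : ContinuousOn J (Icc a b))
    (hderiv : ∀ x ∈ Icc a b, HasFDerivWithinAt f (J x) (Icc a b) x)
    -- at every point of K the Jacobian matrix is a P-matrix: all principal minors positive
    (hP : ∀ x ∈ Icc a b,
      0 < (J x) (Pi.single 0 1) 0 ∧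
      0 < (J x) (Pi.single 1 1) 1 ∧
      0 < (J x) (Pi.single 0 1) 0 * (J x) (Pi.single 1 1) 1
          - (J x) (Pi.single 1 1) 0 * (J x) (Pi.single 0 1) 1) :
    Set.InjOn f (Icc a b) := by
  intro x hx y hy hfxy
  rcases lt_trichotomy (x 1) (y 1) with h | h | h
  · exact (GN.key hab hJcont hderiv hP hx hy hfxy h).elim
  · have e1 : (![x 0, x 1] : Fin 2 → ℝ) = x := GN.eta2 x
    have h0 : x 0 = y 0 := by
      have e2 : (![y 0, x 1] : Fin 2 → ℝ) = y := by rw [h, GN.eta2]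
      rcases lt_trichotomy (x 0) (y 0) with h0 | h0 | h0
      · exfalso
        have hx' : (![x 0, x 1] : Fin 2 → ℝ) ∈ Icc a b := by rw [e1]; exact hx
        have hy' : (![y 0, x 1] : Fin 2 → ℝ) ∈ Icc a b := by rw [e2]; exact hy
        have hm := GN.mono0 hderiv hP hx' hy' h0
        rw [e1, e2, hfxy] at hm
        exact lt_irrefl _ hm
      · exact h0
      · exfalso
        have hx' : (![x 0, x 1] : Fin 2 → ℝ) ∈ Icc a b := by rw [e1]; exact hx
        have hy' : (![y 0, x 1] : Fin 2 → ℝ) ∈ Icc a b := by rw [e2]; exact hy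
        have hm := GN.mono0 hderiv hP hy' hx' h0
        rw [e1, e2, hfxy] at hm
        exact lt_irrefl _ hm
    funext i
    fin_cases i
    · exact h0
    · exact h
  · exact (GN.key hab hJcont hderiv hP hy hx hfxy.symm h).elim
end

section
/- (Kotlarski's lemma, identification of the common factor.) Let Y₁ = A + ε₁, Y₂ = A + ε₂ with A, ε₁, ε₂ mutually independent real random variables, E[ε₁] = 0, and suppose all characteristic functions φ_A, φ_{ε₁}, φ_{ε₂} are nonvanishing and the relevant derivatives exist (e.g., E|ε₁| < ∞, E|A| < ∞). Then φ_A(s) = exp( ∫₀^s (∂/∂t₁ φ_{Y₁,Y₂}(t₁, t₂)|_{t₁=0, t₂=t}) / φ_{Y₁,Y₂}(0, t) dt ). -/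
open MeasureTheory ProbabilityTheory Complex

section KotlarskiAux

variable {Ω : Type*} [MeasurableSpace Ω] {μ : Measure Ω} [IsProbabilityMeasure μ]

lemma norm_cexp_I_mul (t x : ℝ) : ‖Complex.exp (Complex.I * (t * x))‖ = 1 := by
  rw [Complex.norm_exp]
  simp [Complex.mul_re]

lemma integrable_cexp_aux {X : Ω → ℝ} (hX : Measurable X) (t : ℝ) :
    Integrable (fun ω => Complex.exp (Complex.I * (t * X ω))) μ := by
  refine Integrable.mono' (integrable_const 1) (Measurable.aestronglyMeasurable (by fun_prop)) ?_
  filter_upwards with ω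
  rw [norm_cexp_I_mul]

omit [IsProbabilityMeasure μ] in
lemma ProbabilityTheory.IndepFun.integral_mul_complex {u v : Ω → ℂ} (h : IndepFun u v μ)
    (hu : Integrable u μ) (hv : Integrable v μ) :
    ∫ ω, u ω * v ω ∂μ = (∫ ω, u ω ∂μ) * ∫ ω, v ω ∂μ := by
  have huv : Integrable (u * v) μ := h.integrable_mul hu hv
  have hur : Integrable (fun ω => (u ω).re) μ := hu.re
  have hui : Integrable (fun ω => (u ω).im) μ := hu.im
  have hvr : Integrable (fun ω => (v ω).re) μ := hv.re
  have hvi : Integrable (fun ω => (v ω).im) μ := hv.im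
  have hrr : IndepFun (fun ω => (u ω).re) (fun ω => (v ω).re) μ :=
    h.comp Complex.measurable_re Complex.measurable_re
  have hri : IndepFun (fun ω => (u ω).re) (fun ω => (v ω).im) μ :=
    h.comp Complex.measurable_re Complex.measurable_im
  have hir : IndepFun (fun ω => (u ω).im) (fun ω => (v ω).re) μ :=
    h.comp Complex.measurable_im Complex.measurable_re
  have hii : IndepFun (fun ω => (u ω).im) (fun ω => (v ω).im) μ :=
    h.comp Complex.measurable_im Complex.measurable_im
  have irr : Integrable (fun ω => (u ω).re * (v ω).re) μ := hrr.integrable_mul hur hvr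
  have iri : Integrable (fun ω => (u ω).re * (v ω).im) μ := hri.integrable_mul hur hvi
  have iir : Integrable (fun ω => (u ω).im * (v ω).re) μ := hir.integrable_mul hui hvr
  have iii : Integrable (fun ω => (u ω).im * (v ω).im) μ := hii.integrable_mul hui hvi
  have e1 : ∫ ω, (u ω).re * (v ω).re ∂μ = (∫ ω, (u ω).re ∂μ) * ∫ ω, (v ω).re ∂μ :=
    hrr.integral_fun_mul_eq_mul_integral hur.aestronglyMeasurable hvr.aestronglyMeasurable
  have e2 : ∫ ω, (u ω).re * (v ω).im ∂μ = (∫ ω, (u ω).re ∂μ) * ∫ ω, (v ω).im ∂μ :=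
    hri.integral_fun_mul_eq_mul_integral hur.aestronglyMeasurable hvi.aestronglyMeasurable
  have e3 : ∫ ω, (u ω).im * (v ω).re ∂μ = (∫ ω, (u ω).im ∂μ) * ∫ ω, (v ω).re ∂μ :=
    hir.integral_fun_mul_eq_mul_integral hui.aestronglyMeasurable hvr.aestronglyMeasurable
  have e4 : ∫ ω, (u ω).im * (v ω).im ∂μ = (∫ ω, (u ω).im ∂μ) * ∫ ω, (v ω).im ∂μ :=
    hii.integral_fun_mul_eq_mul_integral hui.aestronglyMeasurable hvi.aestronglyMeasurable
  have ru : ∫ ω, (u ω).re ∂μ = (∫ ω, u ω ∂μ).re := integral_re hu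
  have iu : ∫ ω, (u ω).im ∂μ = (∫ ω, u ω ∂μ).im := integral_im hu
  have rv : ∫ ω, (v ω).re ∂μ = (∫ ω, v ω ∂μ).re := integral_re hv
  have iv : ∫ ω, (v ω).im ∂μ = (∫ ω, v ω ∂μ).im := integral_im hv
  apply Complex.ext
  · have h1 : (∫ ω, u ω * v ω ∂μ).re = ∫ ω, (u ω * v ω).re ∂μ := (integral_re huv).symm
    rw [h1]
    simp only [Complex.mul_re]
    rw [integral_sub irr iii, e1, e4, ru, iu, rv, iv]
  · have h1 : (∫ ω, u ω * v ω ∂μ).im = ∫ ω, (u ω * v ω).im ∂μ := (integral_im huv).symm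
    rw [h1]
    simp only [Complex.mul_im]
    rw [integral_add iri iir, e2, e3, ru, iu, rv, iv]

lemma hasDerivAt_inner_cexp (x t : ℝ) :
    HasDerivAt (fun u : ℝ => Complex.exp (Complex.I * (u * x)))
      (Complex.exp (Complex.I * (t * x)) * (Complex.I * x)) t := by
  have h0 : HasDerivAt (fun u : ℝ => ((u * x : ℝ) : ℂ)) (x : ℂ) t := by
    have h : HasDerivAt (fun u : ℝ => u * x) x t := by
      simpa using (hasDerivAt_id t).mul_const x
    simpa using h.ofReal_comp
  have h1 : HasDerivAt (fun u : ℝ => Complex.I * (u * x)) (Complex.I * x) t := by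
    have := h0.const_mul Complex.I
    simpa [Complex.ofReal_mul] using this
  have := h1.cexp
  simpa [Complex.ofReal_mul] using this

lemma hasDerivAt_charfun {X : Ω → ℝ} (hX : Measurable X) (hXint : Integrable X μ) (t : ℝ) :
    HasDerivAt (fun u : ℝ => ∫ ω, Complex.exp (Complex.I * (u * X ω)) ∂μ)
      (∫ ω, Complex.exp (Complex.I * (t * X ω)) * (Complex.I * X ω) ∂μ) t := by
  have key := hasDerivAt_integral_of_dominated_loc_of_deriv_le (μ := μ)
      (F := fun (u : ℝ) ω => Complex.exp (Complex.I * (u * X ω)))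
      (F' := fun (u : ℝ) ω => Complex.exp (Complex.I * (u * X ω)) * (Complex.I * X ω))
      (x₀ := t) (bound := fun ω => |X ω|) (s := Metric.ball t 1) (Metric.ball_mem_nhds t one_pos)
      ?_ ?_ ?_ ?_ ?_ ?_
  · exact key.2
  · filter_upwards with u
    exact Measurable.aestronglyMeasurable (by fun_prop)
  · exact integrable_cexp_aux hX t
  · exact Measurable.aestronglyMeasurable (by fun_prop)
  · filter_upwards with ω u _
    rw [norm_mul, norm_cexp_I_mul, one_mul, norm_mul]
    simp [Complex.norm_real]
  · exact hXint.abs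
  · filter_upwards with ω u _
    exact hasDerivAt_inner_cexp (X ω) u

omit [IsProbabilityMeasure μ] in
lemma continuous_dcharfun {X : Ω → ℝ} (hX : Measurable X) (hXint : Integrable X μ) :
    Continuous (fun t : ℝ => ∫ ω, Complex.exp (Complex.I * (t * X ω)) * (Complex.I * X ω) ∂μ) := by
  refine continuous_of_dominated (fun t => Measurable.aestronglyMeasurable (by fun_prop))
    (fun t => ?_) hXint.abs ?_
  · filter_upwards with ω
    rw [norm_mul, norm_cexp_I_mul, one_mul, norm_mul]
    simp [Complex.norm_real]
  · filter_upwards with ω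
    fun_prop

end KotlarskiAux

/-- Kotlarski's lemma (identification of the common factor): with `Y₁ = A + ε₁`, `Y₂ = A + ε₂`,
`A, ε₁, ε₂` mutually independent, `E[ε₁] = 0`, integrability, and nonvanishing characteristic
functions, `φ_A(s) = exp(∫₀^s ∂₁φ_{Y₁,Y₂}(0,t) / φ_{Y₁,Y₂}(0,t) dt)`. -/
theorem stmt_16 {Ω : Type*} [MeasurableSpace Ω] (μ : Measure Ω) [IsProbabilityMeasure μ]
    (A ε₁ ε₂ : Ω → ℝ) (hA : Measurable A) (hε₁ : Measurable ε₁) (hε₂ : Measurable ε₂)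
    (hindep : iIndepFun ![A, ε₁, ε₂] μ)
    (hAint : Integrable A μ) (hε₁int : Integrable ε₁ μ)
    (hε₁mean : ∫ ω, ε₁ ω ∂μ = 0)
    -- nonvanishing characteristic functions
    (hAnv : ∀ s : ℝ, (∫ ω, Complex.exp (Complex.I * (s * A ω)) ∂μ) ≠ 0)
    (hε₁nv : ∀ s : ℝ, (∫ ω, Complex.exp (Complex.I * (s * ε₁ ω)) ∂μ) ≠ 0)
    (hε₂nv : ∀ s : ℝ, (∫ ω, Complex.exp (Complex.I * (s * ε₂ ω)) ∂μ) ≠ 0)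
    (Y₁ Y₂ : Ω → ℝ) (hY₁ : ∀ ω, Y₁ ω = A ω + ε₁ ω) (hY₂ : ∀ ω, Y₂ ω = A ω + ε₂ ω)
    -- the joint characteristic function of (Y₁, Y₂) and its partial derivative in the first
    -- argument at t₁ = 0
    (cf : ℝ → ℝ → ℂ)
    (hcf : ∀ t₁ t₂, cf t₁ t₂ = ∫ ω, Complex.exp (Complex.I * (t₁ * Y₁ ω + t₂ * Y₂ ω)) ∂μ)
    (D1 : ℝ → ℂ) (hD1 : ∀ t, HasDerivAt (fun t₁ => cf t₁ t) (D1 t) 0) :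
    ∀ s : ℝ, (∫ ω, Complex.exp (Complex.I * (s * A ω)) ∂μ)
      = Complex.exp (∫ t in (0:ℝ)..s, D1 t / cf 0 t) := by
  intro s
  set φA : ℝ → ℂ := fun u => ∫ ω, Complex.exp (Complex.I * (u * A ω)) ∂μ with hφA
  set φ1 : ℝ → ℂ := fun u => ∫ ω, Complex.exp (Complex.I * (u * ε₁ ω)) ∂μ with hφ1
  set φ2 : ℝ → ℂ := fun u => ∫ ω, Complex.exp (Complex.I * (u * ε₂ ω)) ∂μ with hφ2
  set DA : ℝ → ℂ := fun t => ∫ ω, Complex.exp (Complex.I * (t * A ω)) * (Complex.I * A ω) ∂μ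
    with hDAdef
  have hmeas : ∀ i, Measurable (![A, ε₁, ε₂] i) := by
    intro i; fin_cases i <;> simpa
  -- factorization of the joint characteristic function
  have hfact : ∀ t₁ t₂ : ℝ, cf t₁ t₂ = φA (t₁ + t₂) * φ1 t₁ * φ2 t₂ := by
    intro t₁ t₂
    rw [hcf]
    have hsplit : ∀ ω, Complex.exp (Complex.I * (t₁ * Y₁ ω + t₂ * Y₂ ω)) =
        (Complex.exp (Complex.I * (((t₁ + t₂ : ℝ) : ℂ) * A ω)) * Complex.exp (Complex.I * (t₁ * ε₁ ω))) *
          Complex.exp (Complex.I * (t₂ * ε₂ ω)) := by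
      intro ω
      rw [← Complex.exp_add, ← Complex.exp_add]
      congr 1
      rw [hY₁ ω, hY₂ ω]
      push_cast
      ring
    simp_rw [hsplit]
    have hi12_3 : IndepFun (fun ω => (A ω, ε₁ ω)) ε₂ μ := by
      have := hindep.indepFun_prodMk hmeas 0 1 2 (by decide) (by decide)
      simpa using this
    have hUV : IndepFun
        (fun ω => Complex.exp (Complex.I * (((t₁ + t₂ : ℝ) : ℂ) * A ω)) *
          Complex.exp (Complex.I * (t₁ * ε₁ ω)))
        (fun ω => Complex.exp (Complex.I * (t₂ * ε₂ ω))) μ := by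
      have hm1 : Measurable (fun p : ℝ × ℝ =>
          Complex.exp (Complex.I * (((t₁ + t₂ : ℝ) : ℂ) * p.1)) * Complex.exp (Complex.I * (t₁ * p.2))) := by
        fun_prop
      have hm2 : Measurable (fun x : ℝ => Complex.exp (Complex.I * (t₂ * x))) := by fun_prop
      exact hi12_3.comp hm1 hm2
    have hint12 : Integrable (fun ω => Complex.exp (Complex.I * (((t₁ + t₂ : ℝ) : ℂ) * A ω)) *
        Complex.exp (Complex.I * (t₁ * ε₁ ω))) μ := by
      refine Integrable.mono' (integrable_const 1)
        (Measurable.aestronglyMeasurable (by fun_prop)) ?_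
      filter_upwards with ω
      rw [norm_mul, norm_cexp_I_mul, norm_cexp_I_mul, one_mul]
    rw [hUV.integral_mul_complex hint12 (integrable_cexp_aux hε₂ t₂)]
    congr 1
    have hi12 : IndepFun A ε₁ μ := by
      have := hindep.indepFun (i := 0) (j := 1) (by decide)
      simpa using this
    have hiuv : IndepFun (fun ω => Complex.exp (Complex.I * (((t₁ + t₂ : ℝ) : ℂ) * A ω)))
        (fun ω => Complex.exp (Complex.I * (t₁ * ε₁ ω))) μ :=
      hi12.comp (show Measurable (fun x : ℝ => Complex.exp (Complex.I * (((t₁ + t₂ : ℝ) : ℂ) * x))) by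
        fun_prop)
        (show Measurable (fun x : ℝ => Complex.exp (Complex.I * (t₁ * x))) by fun_prop)
    exact hiuv.integral_mul_complex (integrable_cexp_aux hA _) (integrable_cexp_aux hε₁ _)
  have hDA : ∀ t, HasDerivAt φA (DA t) t := fun t => hasDerivAt_charfun hA hAint t
  have h10 : φ1 0 = 1 := by simp [hφ1]
  have hA0 : φA 0 = 1 := by simp [hφA]
  -- derivative of φ1 at 0 vanishes
  have hD10 : (∫ ω, Complex.exp (Complex.I * ((0:ℝ) * ε₁ ω)) * (Complex.I * ε₁ ω) ∂μ) = 0 := by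
    have heq : ∀ ω, Complex.exp (Complex.I * ((0:ℝ) * ε₁ ω)) * (Complex.I * ε₁ ω)
        = Complex.I * (ε₁ ω : ℂ) := by
      intro ω; simp
    simp_rw [heq]
    rw [integral_const_mul]
    have : ∫ ω, ((ε₁ ω : ℂ)) ∂μ = ((∫ ω, ε₁ ω ∂μ : ℝ) : ℂ) := integral_ofReal
    rw [this, hε₁mean]
    simp
  -- identify D1
  have hd : ∀ t, HasDerivAt (fun t₁ => cf t₁ t) (DA t * φ2 t) 0 := by
    intro t
    have hshift : HasDerivAt (fun t₁ : ℝ => φA (t₁ + t)) (DA t) 0 := by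
      refine HasDerivAt.comp_add_const 0 t ?_
      simpa using hDA t
    have h1d : HasDerivAt φ1 0 0 := by
      have := hasDerivAt_charfun (μ := μ) hε₁ hε₁int 0
      rwa [hD10] at this
    have hmul : HasDerivAt (fun t₁ : ℝ => φA (t₁ + t) * φ1 t₁ * φ2 t)
        ((DA t * φ1 0 + φA (0 + t) * 0) * φ2 t) 0 := (hshift.mul h1d).mul_const (φ2 t)
    have hfun : (fun t₁ : ℝ => φA (t₁ + t) * φ1 t₁ * φ2 t) = fun t₁ => cf t₁ t := by
      funext u; rw [hfact]
    rw [hfun] at hmul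
    simpa [h10] using hmul
  have hD1eq : ∀ t, D1 t = DA t * φ2 t := fun t => (hD1 t).unique (hd t)
  have hcf0 : ∀ t, cf 0 t = φA t * φ2 t := by
    intro t; rw [hfact]; simp [h10]
  have hratio : ∀ t, D1 t / cf 0 t = DA t / φA t := by
    intro t
    rw [hD1eq, hcf0, mul_div_mul_right _ _ (hε₂nv t)]
  -- the ODE argument
  have hφAcont : Continuous φA := by
    rw [continuous_iff_continuousAt]
    exact fun t => (hDA t).continuousAt
  have hDAcont : Continuous DA := continuous_dcharfun hA hAint
  have hfcont : Continuous (fun t => DA t / φA t) := hDAcont.div hφAcont hAnv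
  set g : ℝ → ℂ := fun u => ∫ t in (0:ℝ)..u, DA t / φA t with hgdef
  have hgd : ∀ u : ℝ, HasDerivAt g (DA u / φA u) u := fun u =>
    intervalIntegral.integral_hasDerivAt_right (hfcont.intervalIntegrable _ _)
      (hfcont.stronglyMeasurableAtFilter _ _) hfcont.continuousAt
  have hh : ∀ u : ℝ, HasDerivAt (fun v => φA v * Complex.exp (-g v)) 0 u := by
    intro u
    have hder : HasDerivAt (fun v => φA v * Complex.exp (-g v))
        (DA u * Complex.exp (-g u) + φA u * (Complex.exp (-g u) * -(DA u / φA u))) u :=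
      (hDA u).mul (((hgd u).neg).cexp)
    have hzero : DA u * Complex.exp (-g u) + φA u * (Complex.exp (-g u) * -(DA u / φA u)) = 0 := by
      have hx : φA u * (Complex.exp (-g u) * -(DA u / φA u))
          = -(Complex.exp (-g u) * (DA u / φA u * φA u)) := by ring
      rw [hx, div_mul_cancel₀ _ (hAnv u)]
      ring
    rwa [hzero] at hder
  have hconst : φA s * Complex.exp (-g s) = 1 := by
    have hc := is_const_of_deriv_eq_zero (f := fun v => φA v * Complex.exp (-g v))
      (fun v => (hh v).differentiableAt) (fun v => (hh v).deriv) s 0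
    rw [hc]
    simp [hA0, hgdef, intervalIntegral.integral_same]
  have hgoal : φA s = Complex.exp (g s) := by
    have := congrArg (· * Complex.exp (g s)) hconst
    simpa [mul_assoc, ← Complex.exp_add] using this
  have hint : (∫ t in (0:ℝ)..s, D1 t / cf 0 t) = g s :=
    intervalIntegral.integral_congr (fun t _ => hratio t)
  rw [hint]
  exact hgoal
end
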